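/- Let α, β ∈ ℂ with |β| < |α|, let a ≤ b be real numbers, and let μ : ℝ → ℂ be continuously differentiable on [a, b] with |μ(t)| < 1 for all t ∈ [a, b]. Set ν(t) = T(μ(t)). Then exp(∫ₐᵇ (conj(ν(t))·ν′(t) − ν(t)·conj(ν′(t)))/(1 − |ν(t)|²) dt) = (conj(α + μ(a)β)/(α + μ(a)β)) · ((α + μ(b)β)/conj(α + μ(b)β)) · exp(∫ₐᵇ (conj(μ(t))·μ′(t) − μ(t)·conj(μ′(t)))/(1 − |μ(t)|²) dt). (This is the transformation law of the phase factor exp(∫₁² (μ̄ dμ − μ dμ̄)/(1 − |μ|²)) appearing in the bracket {μ(1), μ̄(2)}∘ under a change of the transverse complex coordinate with constant coefficients along a generator, establishing the coordinate invariance of the bracket formula.) -/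

import Mathlib

/-!
With `D = α + μβ` and `K = |α|² − |β|²`, the map `T` has derivative `K / D²` and satisfies
`1 − |T μ|² = K (1 − |μ|²) / |D|²`. Hence `ν̄ ν′ / (1 − |ν|²) = μ̄ μ′ / (1 − |μ|²) + β μ′ / D`.
The phase integrand is this expression minus its conjugate, so the integrands for `ν` and `μ`
differ by `D′/D − conj (D′/D)`, and `exp ∫ₐᵇ D′/D = D(b)/D(a)`.
-/

/-- The Möbius-type transformation of the conformal 2-metric parameter `μ` induced by
the change of transverse complex coordinate `z = α·z′ + conj(β)·conj(z′)`:
`T(μ) = (conj β + μ·conj α)/(α + μ·β)`. -/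
noncomputable def mobiusT (α β μ : ℂ) : ℂ :=
  ((starRingEnd ℂ) β + μ * (starRingEnd ℂ) α) / (α + μ * β)

open Set Complex ComplexConjugate MeasureTheory intervalIntegral

theorem exp_integral_deriv_div_eq_div {f f' : ℝ → ℂ} {a b : ℝ} (hab : a ≤ b)
    (hf : ∀ t ∈ Icc a b, HasDerivAt f (f' t) t) (hf' : ContinuousOn f' (Icc a b))
    (hf0 : ∀ t ∈ Icc a b, f t ≠ 0) :
    exp (∫ t in a..b, f' t / f t) = f b / f a := by
  have hfc : ContinuousOn f (Icc a b) := HasDerivAt.continuousOn hf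
  -- extending `f' / f` continuously to `ℝ` makes its integral a primitive everywhere
  set g : ℝ → ℂ := IccExtend hab ((Icc a b).domRestrict fun t => f' t / f t)
  have hg : Continuous g :=
    (continuousOn_iff_continuous_domRestrict.1 (hf'.div hfc hf0)).Icc_extend'
  have hg_eq : EqOn g (fun t => f' t / f t) (Icc a b) := fun t ht => IccExtend_of_mem hab _ ht
  set E : ℝ → ℂ := fun t => ∫ s in a..t, g s
  have hE : ∀ t, HasDerivAt E (g t) t := fun t => (hg.integral_hasStrictDerivAt a t).hasDerivAt
  have hderiv_zero : ∀ t ∈ Icc a b, HasDerivAt (fun s => exp (-E s) * f s) 0 t := by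
    intro t ht
    refine ((hE t).neg.cexp.mul (hf t ht)).congr_deriv ?_
    rw [hg_eq ht]
    field_simp [hf0 t ht]
    ring
  have hconst := constant_of_has_deriv_right_zero
    (fun t ht => (hderiv_zero t ht).continuousAt.continuousWithinAt)
    (fun t ht => (hderiv_zero t (Ico_subset_Icc_self ht)).hasDerivWithinAt) b (right_mem_Icc.2 hab)
  have hEb : E b = ∫ t in a..b, f' t / f t :=
    integral_congr fun t ht => hg_eq (uIcc_of_le hab ▸ ht)
  simp only [E, integral_same, neg_zero, exp_zero, one_mul] at hconst
  rw [← hEb, eq_div_iff (hf0 a (left_mem_Icc.2 hab)), ← hconst, ← mul_assoc, ← exp_add,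
    add_neg_cancel, exp_zero, one_mul]

theorem exp_integral_deriv_div_sub_conj {f f' : ℝ → ℂ} {a b : ℝ} (hab : a ≤ b)
    (hf : ∀ t ∈ Icc a b, HasDerivAt f (f' t) t) (hf' : ContinuousOn f' (Icc a b))
    (hf0 : ∀ t ∈ Icc a b, f t ≠ 0) :
    exp (∫ t in a..b, (f' t / f t - conj (f' t / f t))) = f b / f a / conj (f b / f a) := by
  have hc : ContinuousOn (fun t => f' t / f t) (Icc a b) :=
    hf'.div (HasDerivAt.continuousOn hf) hf0
  have hc' : ContinuousOn (fun t => conj (f' t / f t)) (Icc a b) :=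
    continuous_conj.comp_continuousOn hc
  rw [integral_sub (hc.intervalIntegrable_of_Icc hab) (hc'.intervalIntegrable_of_Icc hab),
    intervalIntegral_conj, exp_sub, exp_conj, exp_integral_deriv_div_eq_div hab hf hf' hf0]

theorem add_mul_ne_zero_of_norm_lt {𝕜 : Type*} [NormedField 𝕜] {α β z : 𝕜}
    (hβα : ‖β‖ < ‖α‖) (hz : ‖z‖ ≤ 1) : α + z * β ≠ 0 := by
  intro h
  have : ‖α‖ ≤ ‖β‖ := by
    rw [eq_neg_of_add_eq_zero_left h, norm_neg, norm_mul]
    exact mul_le_of_le_one_left (norm_nonneg β) hz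
  exact this.not_gt hβα

theorem ofReal_norm_sq_sub_ofReal_norm_sq_ne_zero {α β : ℂ} (hβα : ‖β‖ ≠ ‖α‖) :
    (‖α‖ : ℂ) ^ 2 - (‖β‖ : ℂ) ^ 2 ≠ 0 := by
  rw [sub_ne_zero]
  exact_mod_cast (pow_left_inj₀ (norm_nonneg _) (norm_nonneg _) two_ne_zero).not.2 hβα.symm

theorem one_sub_ofReal_norm_sq_ne_zero {z : ℂ} (hz : ‖z‖ ≠ 1) : 1 - (‖z‖ : ℂ) ^ 2 ≠ 0 := by
  rw [sub_ne_zero, ne_comm]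
  exact_mod_cast (pow_eq_one_iff_of_nonneg (norm_nonneg z) two_ne_zero).not.2 hz

-- the factors of the product are ordered as `field_simp` normalizes them
theorem conj_add_conj_mul_ne_zero {α β z : ℂ} (hD : α + z * β ≠ 0) :
    conj α + conj β * conj z ≠ 0 := by
  rw [← map_mul, ← map_add, mul_comm]
  exact (map_ne_zero _).2 hD

theorem hasDerivAt_mobiusT {α β z : ℂ} (hD : α + z * β ≠ 0) :
    HasDerivAt (mobiusT α β) (((‖α‖ : ℂ) ^ 2 - (‖β‖ : ℂ) ^ 2) / (α + z * β) ^ 2) z := by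
  have hnum : HasDerivAt (fun w => conj β + w * conj α) (conj α) z := by
    simpa using ((hasDerivAt_id z).mul_const (conj α)).const_add (conj β)
  have hden : HasDerivAt (fun w => α + w * β) β z := by
    simpa using ((hasDerivAt_id z).mul_const β).const_add α
  refine (hnum.div hden hD).congr_deriv ?_
  rw [← mul_conj', ← mul_conj']
  ring

theorem one_sub_norm_mobiusT_sq {α β z : ℂ} (hD : α + z * β ≠ 0) :
    1 - (‖mobiusT α β z‖ : ℂ) ^ 2 =
      ((‖α‖ : ℂ) ^ 2 - (‖β‖ : ℂ) ^ 2) * (1 - (‖z‖ : ℂ) ^ 2) / (‖α + z * β‖ : ℂ) ^ 2 := by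
  have hD' := conj_add_conj_mul_ne_zero hD
  simp only [mobiusT, ← mul_conj', map_div₀, map_add, map_mul, conj_conj]
  field_simp
  ring

theorem conj_mobiusT_mul_div {α β z : ℂ} (hβα : ‖β‖ ≠ ‖α‖) (hD : α + z * β ≠ 0)
    (hz : ‖z‖ ≠ 1) (w : ℂ) :
    conj (mobiusT α β z) * (((‖α‖ : ℂ) ^ 2 - (‖β‖ : ℂ) ^ 2) / (α + z * β) ^ 2 * w) /
        (1 - (‖mobiusT α β z‖ : ℂ) ^ 2) =
      conj z * w / (1 - (‖z‖ : ℂ) ^ 2) + w * β / (α + z * β) := by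
  have hK := ofReal_norm_sq_sub_ofReal_norm_sq_ne_zero hβα
  have hz' := one_sub_ofReal_norm_sq_ne_zero hz
  rw [one_sub_norm_mobiusT_sq hD, div_add_div _ _ hz' hD,
    div_eq_div_iff (by simp_all) (by simp_all)]
  simp only [mobiusT, ← mul_conj', map_div₀, map_add, map_mul, conj_conj] at hK hz' ⊢
  field_simp
  ring

noncomputable def phaseDensity (z w : ℂ) : ℂ := (conj z * w - z * conj w) / (1 - (‖z‖ : ℂ) ^ 2)

theorem phaseDensity_eq_sub_conj (z w : ℂ) :
    phaseDensity z w =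
      conj z * w / (1 - (‖z‖ : ℂ) ^ 2) - conj (conj z * w / (1 - (‖z‖ : ℂ) ^ 2)) := by
  simp only [phaseDensity, map_div₀, map_mul, map_sub, map_one, map_pow, conj_ofReal, conj_conj]
  ring

theorem phaseDensity_mobiusT {α β z : ℂ} (hβα : ‖β‖ ≠ ‖α‖) (hD : α + z * β ≠ 0)
    (hz : ‖z‖ ≠ 1) (w : ℂ) :
    phaseDensity (mobiusT α β z) (((‖α‖ : ℂ) ^ 2 - (‖β‖ : ℂ) ^ 2) / (α + z * β) ^ 2 * w) =
      phaseDensity z w + (w * β / (α + z * β) - conj (w * β / (α + z * β))) := by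
  rw [phaseDensity_eq_sub_conj, phaseDensity_eq_sub_conj, conj_mobiusT_mul_div hβα hD hz, map_add]
  ring

theorem ContinuousOn.phaseDensity {X : Type*} [TopologicalSpace X] {f f' : X → ℂ} {s : Set X}
    (hf : ContinuousOn f s) (hf' : ContinuousOn f' s) (hf1 : ∀ x ∈ s, ‖f x‖ ≠ 1) :
    ContinuousOn (fun x => phaseDensity (f x) (f' x)) s :=
  ContinuousOn.div (by fun_prop) (by fun_prop) fun x hx => one_sub_ofReal_norm_sq_ne_zero (hf1 x hx)

/-- Transformation law of the phase factor `exp(∫ (μ̄ dμ − μ dμ̄)/(1 − |μ|²))` along a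
generator under the change of transverse complex coordinate encoded by `T`: if
`μ : ℝ → ℂ` is continuously differentiable on `[a, b]` with `|μ(t)| < 1` there, and
`ν(t) = T(μ(t))` with derivative `ν′`, then
`exp(∫ₐᵇ (ν̄ν′ − νν̄′)/(1 − |ν|²)) =
  (conj(α + μ(a)β)/(α + μ(a)β)) · ((α + μ(b)β)/conj(α + μ(b)β)) ·
    exp(∫ₐᵇ (μ̄μ′ − μμ̄′)/(1 − |μ|²))`. -/
theorem mobiusT_phase_transformation (α β : ℂ)
    (hβα : ‖β‖ < ‖α‖)
    (a b : ℝ) (hab : a ≤ b) (μ μ' : ℝ → ℂ)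
    (hμderiv : ∀ t ∈ Set.Icc a b, HasDerivAt μ (μ' t) t)
    (hμcont : ContinuousOn μ' (Set.Icc a b))
    (hμlt : ∀ t ∈ Set.Icc a b, ‖μ t‖ < 1)
    (ν ν' : ℝ → ℂ)
    (hν : ∀ t, ν t = mobiusT α β (μ t))
    (hνderiv : ∀ t ∈ Set.Icc a b, HasDerivAt ν (ν' t) t) :
    Complex.exp (∫ t in a..b,
        ((starRingEnd ℂ) (ν t) * ν' t - ν t * (starRingEnd ℂ) (ν' t)) /
          (1 - (‖ν t‖ : ℂ) ^ 2)) =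
      ((starRingEnd ℂ) (α + μ a * β) / (α + μ a * β)) *
        ((α + μ b * β) / (starRingEnd ℂ) (α + μ b * β)) *
        Complex.exp (∫ t in a..b,
          ((starRingEnd ℂ) (μ t) * μ' t - μ t * (starRingEnd ℂ) (μ' t)) /
            (1 - (‖μ t‖ : ℂ) ^ 2)) := by
  have hD : ∀ t ∈ Icc a b, α + μ t * β ≠ 0 := fun t ht =>
    add_mul_ne_zero_of_norm_lt hβα (hμlt t ht).le
  have hν' : ∀ t ∈ Icc a b,
      ν' t = ((‖α‖ : ℂ) ^ 2 - (‖β‖ : ℂ) ^ 2) / (α + μ t * β) ^ 2 * μ' t := by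
    intro t ht
    rw [show ν = mobiusT α β ∘ μ from funext hν] at hνderiv
    exact (hνderiv t ht).unique ((hasDerivAt_mobiusT (hD t ht)).comp t (hμderiv t ht))
  have hμc : ContinuousOn μ (Icc a b) := HasDerivAt.continuousOn hμderiv
  have hφ : IntervalIntegrable (fun t => phaseDensity (μ t) (μ' t)) volume a b :=
    (hμc.phaseDensity hμcont fun t ht => (hμlt t ht).ne).intervalIntegrable_of_Icc hab
  have hlogD : ContinuousOn (fun t => μ' t * β / (α + μ t * β)) (Icc a b) :=
    ContinuousOn.div (by fun_prop) (by fun_prop) hD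
  have hlogD_sub_conj : IntervalIntegrable
      (fun t => μ' t * β / (α + μ t * β) - conj (μ' t * β / (α + μ t * β))) volume a b :=
    (hlogD.sub (continuous_conj.comp_continuousOn hlogD)).intervalIntegrable_of_Icc hab
  have hintegrand : EqOn (fun t => phaseDensity (ν t) (ν' t))
      (fun t => phaseDensity (μ t) (μ' t) +
        (μ' t * β / (α + μ t * β) - conj (μ' t * β / (α + μ t * β)))) (uIcc a b) := by
    intro t ht
    rw [uIcc_of_le hab] at ht
    dsimp only
    rw [hν t, hν' t ht, phaseDensity_mobiusT hβα.ne (hD t ht) (hμlt t ht).ne]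
  change exp (∫ t in a..b, phaseDensity (ν t) (ν' t)) =
    _ * exp (∫ t in a..b, phaseDensity (μ t) (μ' t))
  rw [integral_congr hintegrand, integral_add hφ hlogD_sub_conj, exp_add,
    exp_integral_deriv_div_sub_conj (f := fun t => α + μ t * β) hab
      (fun t ht => ((hμderiv t ht).mul_const β).const_add α) (hμcont.mul continuousOn_const) hD,
    map_div₀]
  have ha := hD a (left_mem_Icc.2 hab)
  have hb := hD b (right_mem_Icc.2 hab)
  field_simp
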